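/- arXiv:1301.0726 — 4 statements merged into one kernel-verified Lean document; each statement's English description precedes it below -/
import Mathlib

section
/- Let X_1 be a real random variable, φ a weight function, G the distribution function of φ(X_1) and Ḡ := 1 − G, and let α: [0,∞) → [0,1/4] be a nonincreasing function with α(t) ≤ C·t^{−ϑ} for all t ≥ 1 and some constants C > 0, ϑ > 0. If 𝔼[φ(X_1)·max(log φ(X_1), 0)] < ∞, then ∫_0^1 log(1 + α^→(s/2)) · Ḡ^→(s) ds < ∞. -/
open MeasureTheory Filter Set

/-- Distribution function of a random variable. -/
noncomputable def distFun {Ω : Type*} [MeasurableSpace Ω] (P : Measure Ω) (Y : Ω → ℝ) (x : ℝ) : ℝ :=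
  (P {ω | Y ω ≤ x}).toReal

/-- A weight function: continuous, bounded away from 0, and u-shaped. -/
def IsWeightFun (φ : ℝ → ℝ) : Prop :=
  Continuous φ ∧ (∃ ε > 0, ∀ x, ε ≤ φ x) ∧
    ∃ x₀ : ℝ, (∀ x y, x ≤ y → y ≤ x₀ → φ y ≤ φ x) ∧ ∀ x y, x₀ ≤ x → x ≤ y → φ x ≤ φ y

/-- Right-continuous inverse of a nonincreasing function on `[0,∞)`, with `sup ∅ = 0`. -/
noncomputable def rcInv (h : ℝ → ℝ) (y : ℝ) : ℝ :=
  sSup { x : ℝ | 0 ≤ x ∧ y < h x }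

/-!
The right-continuous inverse `q = Ḡ^→` of the survival function carries Lebesgue measure on `(0, 1)`
to the law of `φ(X₁)`, so the `L log L` hypothesis says that `q log⁺ q` is integrable on `(0, 1)`.
The decay `α(t) ≤ C t^{-ϑ}` gives `(1 + α^→(s/2))^ϑ ≲ 1/s`, so `w = (ϑ/2) log(1 + α^→(s/2))` has
`e^w ≲ s^{-1/2}`, which is integrable. Young's inequality `ab ≤ a log⁺ a + e^b` then makes `w q`,
and hence `log(1 + α^→(s/2)) q = (2/ϑ) w q`, integrable.
-/

open Topology ProbabilityTheory

section rcInv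

variable {h : ℝ → ℝ} {x y T : ℝ}

lemma rcInv_nonneg (h : ℝ → ℝ) (y : ℝ) : 0 ≤ rcInv h y :=
  Real.sSup_nonneg fun _ hx => hx.1

lemma rcInv_le_of_forall (hT : 0 ≤ T) (hb : ∀ x, 0 ≤ x → y < h x → x ≤ T) : rcInv h y ≤ T :=
  Real.sSup_le (fun x hx => hb x hx.1 hx.2) hT

lemma rcInv_antitoneOn {S : Set ℝ} (hb : ∀ y ∈ S, BddAbove {x | 0 ≤ x ∧ y < h x}) :
    AntitoneOn (rcInv h) S := by
  intro y hy y' _ hyy'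
  rcases eq_empty_or_nonempty {x | 0 ≤ x ∧ y' < h x} with he | hne
  · rw [rcInv, he, Real.sSup_empty]
    exact rcInv_nonneg h y
  · exact csSup_le_csSup (hb y hy) hne fun x hx => ⟨hx.1, hyy'.trans_lt hx.2⟩

lemma bddAbove_of_tendsto_zero (hh : Tendsto h atTop (𝓝 0)) (hy : 0 < y) :
    BddAbove {x | 0 ≤ x ∧ y < h x} := by
  obtain ⟨M, hM⟩ := eventually_atTop.1 (hh.eventually (gt_mem_nhds hy))
  exact ⟨M, fun x hx => not_lt.1 fun hMx => (hM x hMx.le).not_gt hx.2⟩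

lemma rcInv_le_iff (hanti : Antitone h) (hcont : ContinuousWithinAt h (Ici x) x)
    (hb : BddAbove {x | 0 ≤ x ∧ y < h x}) (hx : 0 ≤ x) : rcInv h y ≤ x ↔ h x ≤ y := by
  refine ⟨fun hle => not_lt.1 fun hlt => ?_, fun hle => rcInv_le_of_forall hx fun z _ hz =>
    not_lt.1 fun hxz => (hanti hxz.le).not_gt (hle.trans_lt hz)⟩
  have hnear : ∀ᶠ z in 𝓝[>] x, y < h z ∧ x < z :=
    ((hcont.mono Ioi_subset_Ici_self).eventually (lt_mem_nhds hlt)).and self_mem_nhdsWithin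
  obtain ⟨z, hz, hxz⟩ := hnear.exists
  exact (le_csSup hb ⟨hx.trans hxz.le, hz⟩).trans hle |>.not_gt hxz

end rcInv

lemma volume_Ioo_inter_Ici {g : ℝ} (hg0 : 0 ≤ g) :
    volume (Ioo 0 1 ∩ Ici g) = ENNReal.ofReal (1 - g) := by
  refine le_antisymm ?_ ?_
  · calc volume (Ioo 0 1 ∩ Ici g) ≤ volume (Icc g 1) :=
          measure_mono fun s hs => ⟨hs.2, hs.1.2.le⟩
      _ = ENNReal.ofReal (1 - g) := Real.volume_Icc
  · calc ENNReal.ofReal (1 - g) = volume (Ioo g 1) := Real.volume_Ioo.symm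
      _ ≤ volume (Ioo 0 1 ∩ Ici g) :=
          measure_mono fun s hs => ⟨⟨hg0.trans_lt hs.1, hs.2⟩, hs.1.le⟩

section quantile

variable (μ : Measure ℝ)

lemma bddAbove_one_sub_cdf {y : ℝ} (hy : 0 < y) : BddAbove {x | 0 ≤ x ∧ y < 1 - cdf μ x} :=
  bddAbove_of_tendsto_zero (by simpa using (tendsto_cdf_atTop μ).const_sub 1) hy

lemma aemeasurable_rcInv_one_sub_cdf :
    AEMeasurable (rcInv fun x => 1 - cdf μ x) (volume.restrict (Ioo 0 1)) :=
  aemeasurable_restrict_of_antitoneOn measurableSet_Ioo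
    (rcInv_antitoneOn fun _ hy => bddAbove_one_sub_cdf μ hy.1)

variable [IsProbabilityMeasure μ] {μ}

theorem map_rcInv_one_sub_cdf (hμ : μ (Iio 0) = 0) :
    (volume.restrict (Ioo 0 1)).map (rcInv fun x => 1 - cdf μ x) = μ := by
  set G : ℝ → ℝ := fun x => 1 - cdf μ x
  have hanti : Antitone G := fun a b hab => sub_le_sub_left (monotone_cdf μ hab) 1
  refine (Measure.ext_of_Iic μ _ fun a => ?_).symm
  rw [Measure.map_apply_of_aemeasurable (aemeasurable_rcInv_one_sub_cdf μ) measurableSet_Iic,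
    Measure.restrict_apply' measurableSet_Ioo]
  rcases lt_or_ge a 0 with ha | ha
  · have hempty : rcInv G ⁻¹' Iic a ∩ Ioo 0 1 = ∅ :=
      eq_empty_of_forall_notMem fun s hs => ((rcInv_nonneg G s).trans hs.1).not_gt ha
    rw [hempty, measure_empty, measure_mono_null (Iic_subset_Iio.2 ha) hμ]
  · have hset : rcInv G ⁻¹' Iic a ∩ Ioo 0 1 = Ioo 0 1 ∩ Ici (G a) := by
      ext s
      simp only [mem_inter_iff, mem_preimage, mem_Iic, mem_Ici, and_comm (a := s ∈ Ioo 0 1)]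
      exact and_congr_left fun hs => rcInv_le_iff hanti
        (((cdf μ).right_continuous a).const_sub 1) (bddAbove_one_sub_cdf μ hs.1) ha
    rw [hset, volume_Ioo_inter_Ici (by linarith [cdf_le_one μ a]), sub_sub_cancel, ofReal_cdf]

lemma Integrable.comp_rcInv_one_sub_cdf (hμ : μ (Iio 0) = 0) {g : ℝ → ℝ}
    (hg : AEStronglyMeasurable g μ) (hint : Integrable g μ) :
    IntegrableOn (fun s => g (rcInv (fun x => 1 - cdf μ x) s)) (Ioo 0 1) := by
  rw [← map_rcInv_one_sub_cdf hμ] at hg hint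
  exact (integrable_map_measure hg (aemeasurable_rcInv_one_sub_cdf μ)).1 hint

end quantile

lemma distFun_eq_cdf_map {Ω : Type*} [MeasurableSpace Ω] (P : Measure Ω) [IsProbabilityMeasure P]
    {Y : Ω → ℝ} (hY : Measurable Y) : distFun P Y = cdf (P.map Y) := by
  have := Measure.isProbabilityMeasure_map (μ := P) hY.aemeasurable
  ext x
  rw [cdf_eq_real, measureReal_def, Measure.map_apply hY measurableSet_Iic]
  rfl

lemma mul_le_mul_max_log_add_exp {a : ℝ} (ha : 0 ≤ a) (b : ℝ) :
    a * b ≤ a * max (Real.log a) 0 + Real.exp b := by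
  rcases ha.eq_or_lt with rfl | ha
  · simp [Real.exp_nonneg]
  have hfenchel : a * (b - Real.log a + 1) ≤ Real.exp b :=
    calc a * (b - Real.log a + 1) ≤ a * Real.exp (b - Real.log a) :=
          mul_le_mul_of_nonneg_left (Real.add_one_le_exp _) ha.le
      _ = Real.exp b := by rw [Real.exp_sub, Real.exp_log ha]; field_simp
  nlinarith [mul_le_mul_of_nonneg_left (le_max_left (Real.log a) 0) ha.le]

theorem Integrable.mul_of_mul_log_of_exp {Ω : Type*} [MeasurableSpace Ω] {μ : Measure Ω}
    {w q : Ω → ℝ} (hw : AEMeasurable w μ) (hq : AEMeasurable q μ) (hw0 : 0 ≤ᵐ[μ] w)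
    (hq0 : 0 ≤ᵐ[μ] q) (hexp : Integrable (fun ω => Real.exp (w ω)) μ)
    (hlog : Integrable (fun ω => q ω * max (Real.log (q ω)) 0) μ) :
    Integrable (fun ω => w ω * q ω) μ := by
  refine (hlog.add hexp).mono' (hw.mul hq).aestronglyMeasurable ?_
  filter_upwards [hw0, hq0] with ω hwω hqω
  rw [Real.norm_of_nonneg (mul_nonneg hwω hqω), mul_comm]
  exact mul_le_mul_max_log_add_exp hqω (w ω)

section decay

variable {α : ℝ → ℝ} {C ϑ y : ℝ}

lemma le_rpow_inv_of_lt_of_decay (hϑ : 0 < ϑ) (hC : 1 ≤ C)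
    (hα : ∀ t, 1 ≤ t → α t ≤ C * t ^ (-ϑ)) (hy0 : 0 < y) (hy1 : y ≤ 1) {x : ℝ} (hx : 0 ≤ x)
    (hyx : y < α x) : x ≤ (C / y) ^ ϑ⁻¹ := by
  rcases le_or_gt x 1 with hx1 | hx1
  · exact hx1.trans (Real.one_le_rpow ((one_le_div hy0).2 (hy1.trans hC)) (inv_nonneg.2 hϑ.le))
  have hxϑ : x ^ ϑ < C / y := by
    have hxϑ0 : 0 < x ^ ϑ := Real.rpow_pos_of_pos (zero_lt_one.trans hx1) ϑ
    have := hyx.trans_le (hα x hx1.le)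
    rw [Real.rpow_neg hx, ← div_eq_mul_inv, lt_div_iff₀ hxϑ0] at this
    rwa [lt_div_iff₀ hy0, mul_comm]
  calc x = (x ^ ϑ) ^ ϑ⁻¹ := (Real.rpow_rpow_inv hx hϑ.ne').symm
    _ ≤ (C / y) ^ ϑ⁻¹ := Real.rpow_le_rpow (by positivity) hxϑ.le (inv_nonneg.2 hϑ.le)

lemma one_add_rcInv_rpow_le_of_decay (hϑ : 0 < ϑ) (hC : 1 ≤ C)
    (hα : ∀ t, 1 ≤ t → α t ≤ C * t ^ (-ϑ)) (hy0 : 0 < y) (hy1 : y ≤ 1) :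
    (1 + rcInv α y) ^ ϑ ≤ 2 ^ ϑ * (C / y) := by
  have hCy : 1 ≤ C / y := (one_le_div hy0).2 (hy1.trans hC)
  have hT : 1 ≤ (C / y) ^ ϑ⁻¹ := Real.one_le_rpow hCy (inv_nonneg.2 hϑ.le)
  have hr : rcInv α y ≤ (C / y) ^ ϑ⁻¹ := rcInv_le_of_forall (by linarith) fun x hx hyx =>
    le_rpow_inv_of_lt_of_decay hϑ hC hα hy0 hy1 hx hyx
  calc (1 + rcInv α y) ^ ϑ ≤ (2 * (C / y) ^ ϑ⁻¹) ^ ϑ :=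
        Real.rpow_le_rpow (by linarith [rcInv_nonneg α y]) (by linarith) hϑ.le
    _ = 2 ^ ϑ * (C / y) := by
        rw [Real.mul_rpow zero_le_two (by positivity), Real.rpow_inv_rpow (by linarith) hϑ.ne']

lemma aemeasurable_rcInv_half_of_decay (hϑ : 0 < ϑ) (hC : 1 ≤ C)
    (hα : ∀ t, 1 ≤ t → α t ≤ C * t ^ (-ϑ)) :
    AEMeasurable (fun s => rcInv α (s / 2)) (volume.restrict (Ioo 0 1)) := by
  have hanti : AntitoneOn (rcInv α) (Ioc 0 1) := rcInv_antitoneOn fun y hy =>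
    ⟨_, fun x hx => le_rpow_inv_of_lt_of_decay hϑ hC hα hy.1 hy.2 hx.1 hx.2⟩
  refine aemeasurable_restrict_of_antitoneOn measurableSet_Ioo fun s hs t ht hst => ?_
  exact hanti ⟨half_pos hs.1, by linarith [hs.2]⟩ ⟨half_pos ht.1, by linarith [ht.2]⟩
    (by linarith)

lemma integrableOn_one_add_rcInv_half_rpow_of_decay (hϑ : 0 < ϑ) (hC : 1 ≤ C)
    (hα : ∀ t, 1 ≤ t → α t ≤ C * t ^ (-ϑ)) :
    IntegrableOn (fun s => (1 + rcInv α (s / 2)) ^ (ϑ / 2)) (Ioo 0 1) := by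
  have hpow : IntegrableOn (fun s : ℝ => s ^ (-(1 / 2) : ℝ)) (Ioo 0 1) :=
    (intervalIntegral.integrableOn_Ioo_rpow_iff one_pos).2 (by norm_num)
  refine (hpow.const_mul ((2 ^ ϑ * 2 * C) ^ (1 / 2 : ℝ))).mono'
    (((aemeasurable_rcInv_half_of_decay hϑ hC hα).const_add 1).pow_const _).aestronglyMeasurable ?_
  filter_upwards [ae_restrict_mem measurableSet_Ioo] with s hs
  have hs2 : 0 < s / 2 := half_pos hs.1
  have hr : 0 ≤ 1 + rcInv α (s / 2) := by linarith [rcInv_nonneg α (s / 2)]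
  rw [Real.norm_of_nonneg (Real.rpow_nonneg hr _)]
  calc (1 + rcInv α (s / 2)) ^ (ϑ / 2) = ((1 + rcInv α (s / 2)) ^ ϑ) ^ (1 / 2 : ℝ) := by
        rw [← Real.rpow_mul hr]; ring_nf
    _ ≤ (2 ^ ϑ * (C / (s / 2))) ^ (1 / 2 : ℝ) := Real.rpow_le_rpow (Real.rpow_nonneg hr _)
        (one_add_rcInv_rpow_le_of_decay hϑ hC hα hs2 (by linarith [hs.2])) (by norm_num)
    _ = (2 ^ ϑ * 2 * C) ^ (1 / 2 : ℝ) * s ^ (-(1 / 2) : ℝ) := by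
        have : 0 ≤ C := by linarith
        rw [Real.rpow_neg hs.1.le, ← Real.inv_rpow hs.1.le, ← Real.mul_rpow (by positivity)
          (inv_nonneg.2 hs.1.le)]
        congr 1
        field_simp

end decay

theorem integrability_condition_of_LlogL_general
    {Ω : Type*} [MeasurableSpace Ω] (P : Measure Ω) [IsProbabilityMeasure P]
    (X : Ω → ℝ) (hmeas : Measurable X)
    (φ : ℝ → ℝ) (hφ : IsWeightFun φ)
    (α : ℝ → ℝ)
    (C ϑ : ℝ) (hϑ : 0 < ϑ)
    (hα_bound : ∀ t : ℝ, 1 ≤ t → α t ≤ C * t ^ (-ϑ))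
    (hLlogL : Integrable (fun ω => φ (X ω) * max (Real.log (φ (X ω))) 0) P) :
    IntegrableOn
      (fun s => Real.log (1 + rcInv α (s / 2)) *
        rcInv (fun x => 1 - distFun P (fun ω => φ (X ω)) x) s)
      (Set.Ioo (0 : ℝ) 1) := by
  obtain ⟨hφc, ⟨ε, hε, hφε⟩, -⟩ := hφ
  have hY : Measurable fun ω => φ (X ω) := hφc.measurable.comp hmeas
  have := Measure.isProbabilityMeasure_map (μ := P) hY.aemeasurable
  have hlaw : P.map (fun ω => φ (X ω)) (Iio 0) = 0 := by
    rw [Measure.map_apply hY measurableSet_Iio]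
    exact measure_mono_null (fun ω (hω : φ (X ω) < 0) => (hε.trans_le (hφε (X ω))).not_gt hω)
      measure_empty
  have hg : Measurable fun t : ℝ => t * max (Real.log t) 0 := by fun_prop
  have hq_log := Integrable.comp_rcInv_one_sub_cdf hlaw hg.aestronglyMeasurable
    ((integrable_map_measure hg.aestronglyMeasurable hY.aemeasurable).2 hLlogL)
  have hα' : ∀ t, 1 ≤ t → α t ≤ max 1 C * t ^ (-ϑ) := fun t ht => (hα_bound t ht).trans
    (mul_le_mul_of_nonneg_right (le_max_right 1 C) (Real.rpow_nonneg (by linarith) _))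
  set w : ℝ → ℝ := fun s => ϑ / 2 * Real.log (1 + rcInv α (s / 2))
  have hr1 : ∀ s, 1 ≤ 1 + rcInv α (s / 2) := fun s => le_add_of_nonneg_right (rcInv_nonneg _ _)
  have hw_meas : AEMeasurable w (volume.restrict (Ioo 0 1)) :=
    (((aemeasurable_rcInv_half_of_decay hϑ (le_max_left 1 C) hα').const_add 1).log).const_mul _
  have hw_nonneg : 0 ≤ᵐ[volume.restrict (Ioo 0 1)] w :=
    ae_of_all _ fun s => mul_nonneg (by positivity) (Real.log_nonneg (hr1 s))
  have hw_exp : IntegrableOn (fun s => Real.exp (w s)) (Ioo 0 1) :=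
    (integrableOn_one_add_rcInv_half_rpow_of_decay hϑ (le_max_left 1 C) hα').congr
      (ae_of_all _ fun s => by
        simp only [w, Real.rpow_def_of_pos (zero_lt_one.trans_le (hr1 s)), mul_comm])
  have hwq := Integrable.mul_of_mul_log_of_exp hw_meas (aemeasurable_rcInv_one_sub_cdf _)
    hw_nonneg (ae_of_all _ fun s => rcInv_nonneg _ s) hw_exp hq_log
  rw [distFun_eq_cdf_map P hY]
  refine (hwq.const_mul (2 / ϑ)).congr (ae_of_all _ fun s => ?_)
  simp only [w]
  field_simp

/-- If `E[φ(X₁) log⁺ φ(X₁)] < ∞` and the nonincreasing function `α : [0,∞) → [0,1/4]`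
satisfies `α(t) ≤ C t^{-ϑ}` for `t ≥ 1` (some `C, ϑ > 0`), then
`∫_0^1 log(1 + α^→(s/2)) Ḡ^→(s) ds < ∞`, where `G` is the df of `φ(X₁)`. -/
theorem integrability_condition_of_LlogL
    {Ω : Type*} [MeasurableSpace Ω] (P : Measure Ω) [IsProbabilityMeasure P]
    (X : Ω → ℝ) (hmeas : Measurable X)
    (φ : ℝ → ℝ) (hφ : IsWeightFun φ)
    (α : ℝ → ℝ) (hα_mono : ∀ s t : ℝ, 0 ≤ s → s ≤ t → α t ≤ α s)
    (hα_range : ∀ t : ℝ, 0 ≤ t → α t ∈ Set.Icc (0 : ℝ) (1 / 4))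
    (C ϑ : ℝ) (hC : 0 < C) (hϑ : 0 < ϑ)
    (hα_bound : ∀ t : ℝ, 1 ≤ t → α t ≤ C * t ^ (-ϑ))
    (hLlogL : Integrable (fun ω => φ (X ω) * max (Real.log (φ (X ω))) 0) P) :
    IntegrableOn
      (fun s => Real.log (1 + rcInv α (s / 2)) *
        rcInv (fun x => 1 - distFun P (fun ω => φ (X ω)) x) s)
      (Set.Ioo (0 : ℝ) 1) :=
  integrability_condition_of_LlogL_general P X hmeas φ hφ α C ϑ hϑ hα_bound hLlogL
end

section
/- Let β′ ∈ [0,1), β := 1 − β′, C > 0, and let K be a continuous convex distribution function of a probability measure on [0,1] (i.e., K: [0,1] → [0,1] convex, continuous, nondecreasing, K(0) = 0, K(1) = 1) satisfying 1 − K(x) ≤ C·(1−x)^β for all x ∈ [0,1]. Then |K(y) − K(x)| ≤ C·(1−x)^{−β′}·|y − x| for all x, y ∈ (0,1); in particular, K is locally Lipschitz at every x ∈ (0,1) with local Lipschitz constant L(x) = C·(1−x)^{−β′} ≤ C·x^{−β′}(1−x)^{−β′}. -/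
open Set

/-- **Remark 1 of the paper.** A continuous convex distribution function `K` on `[0,1]`
with `1 - K(x) ≤ C (1-x)^β`, `β = 1 - β'`, is locally Lipschitz at every `x ∈ (0,1)` with
local Lipschitz constant `L(x) = C (1-x)^{-β'} ≤ C x^{-β'} (1-x)^{-β'}`. -/
theorem convex_df_local_lipschitz
    (β' C : ℝ) (hβ'0 : 0 ≤ β') (hβ'1 : β' < 1) (hC : 0 < C)
    (K : ℝ → ℝ)
    (hconv : ConvexOn ℝ (Set.Icc (0 : ℝ) 1) K)
    (hcont : ContinuousOn K (Set.Icc (0 : ℝ) 1))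
    (hmono : MonotoneOn K (Set.Icc (0 : ℝ) 1))
    (hK0 : K 0 = 0) (hK1 : K 1 = 1)
    (hbound : ∀ x ∈ Set.Icc (0 : ℝ) 1, 1 - K x ≤ C * (1 - x) ^ (1 - β')) :
    (∀ x ∈ Set.Ioo (0 : ℝ) 1, ∀ y ∈ Set.Ioo (0 : ℝ) 1,
      |K y - K x| ≤ C * (1 - x) ^ (-β') * |y - x|) ∧
    ∀ x ∈ Set.Ioo (0 : ℝ) 1,
      C * (1 - x) ^ (-β') ≤ C * x ^ (-β') * (1 - x) ^ (-β') := by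
  constructor
  · intro x hx y hy
    obtain ⟨hx0, hx1⟩ := hx
    obtain ⟨hy0, hy1⟩ := hy
    have hxI : x ∈ Set.Icc (0:ℝ) 1 := ⟨hx0.le, hx1.le⟩
    have hyI : y ∈ Set.Icc (0:ℝ) 1 := ⟨hy0.le, hy1.le⟩
    have h1I : (1:ℝ) ∈ Set.Icc (0:ℝ) 1 := ⟨zero_le_one, le_refl 1⟩
    have h1x : (0:ℝ) < 1 - x := by linarith
    -- key: L(x) = C (1-x)^{-β'} bounds the slope (1 - K x)/(1 - x)
    have hL : (1 - K x) / (1 - x) ≤ C * (1 - x) ^ (-β') := by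
      have hb := hbound x hxI
      have hrw : C * (1 - x) ^ (1 - β') = (C * (1 - x) ^ (-β')) * (1 - x) := by
        rw [mul_assoc, ← Real.rpow_add_one h1x.ne' (-β')]
        ring_nf
      rw [div_le_iff₀ h1x]
      linarith [hrw ▸ hb]
    have hLnn : (0:ℝ) ≤ C * (1 - x) ^ (-β') := by positivity
    -- main slope inequality: |K y - K x| ≤ ((1 - K x)/(1-x)) * |y - x|
    have key : |K y - K x| ≤ ((1 - K x) / (1 - x)) * |y - x| := by
      rcases lt_trichotomy x y with hlt | heq | hgt
      · have hmono' : K x ≤ K y := hmono hxI hyI hlt.le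
        have hs := hconv.secant_mono hxI hyI h1I hlt.ne' (by linarith) hy1.le
        -- (K y - K x)/(y - x) ≤ (K 1 - K x)/(1 - x)
        rw [abs_of_nonneg (by linarith : (0:ℝ) ≤ K y - K x),
            abs_of_nonneg (by linarith : (0:ℝ) ≤ y - x)]
        rw [hK1] at hs
        exact (div_le_iff₀ (by linarith : (0:ℝ) < y - x)).mp hs
      · simp [heq]
      · have hmono' : K y ≤ K x := hmono hyI hxI hgt.le
        have hs := hconv.slope_mono_adjacent hyI h1I hgt hx1
        rw [hK1] at hs
        rw [abs_of_nonpos (by linarith : K y - K x ≤ 0),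
            abs_of_nonpos (by linarith : y - x ≤ 0)]
        have := (div_le_iff₀ (by linarith : (0:ℝ) < x - y)).mp hs
        linarith [this]
    calc |K y - K x| ≤ ((1 - K x) / (1 - x)) * |y - x| := key
      _ ≤ C * (1 - x) ^ (-β') * |y - x| := by
          apply mul_le_mul_of_nonneg_right hL (abs_nonneg _)
  · intro x hx
    have hx0 := hx.1
    have h1x : (0:ℝ) < 1 - x := by linarith [hx.2]
    have h1 : (1:ℝ) ≤ x ^ (-β') :=
      Real.one_le_rpow_of_pos_of_le_one_of_nonpos hx0 hx.2.le (by linarith)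
    have hnn : (0:ℝ) ≤ C * (1 - x) ^ (-β') := by positivity
    calc C * (1 - x) ^ (-β') = 1 * (C * (1 - x) ^ (-β')) := by ring
      _ ≤ x ^ (-β') * (C * (1 - x) ^ (-β')) := mul_le_mul_of_nonneg_right h1 hnn
      _ = C * x ^ (-β') * (1 - x) ^ (-β') := by ring
end

section
/- Let (Ω, 𝓕, ℙ) be a probability space, p ∈ [1, ∞) and a ∈ [0,1]. Then the map ρ_{p,a}: L^p(Ω,𝓕,ℙ) → ℝ defined by ρ_{p,a}(X) := 𝔼[X] + a·(𝔼[((X − 𝔼[X])⁺)^p])^{1/p} is a law-invariant coherent risk measure, i.e., it satisfies: (monotonicity) ρ_{p,a}(X) ≤ ρ_{p,a}(Y) whenever X ≤ Y ℙ-a.s.; (translation-equivariance) ρ_{p,a}(X + m) = ρ_{p,a}(X) + m for all m ∈ ℝ; (subadditivity) ρ_{p,a}(X + Y) ≤ ρ_{p,a}(X) + ρ_{p,a}(Y); (positive homogeneity) ρ_{p,a}(λX) = λ·ρ_{p,a}(X) for all λ ≥ 0; and ρ_{p,a}(X) = ρ_{p,a}(Y) whenever X and Y have the same distribution. -/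
open MeasureTheory Filter Set

/-!
Write `ρ(X) = 𝔼[X] + a‖(X - 𝔼[X])⁺‖_p`. The mean is linear and law-invariant, and
`f ↦ ‖f⁺‖_p` is monotone, subadditive (Minkowski together with `(f + g)⁺ ≤ f⁺ + g⁺`) and
positively homogeneous, which gives everything except monotonicity at once. For monotonicity,
if `X ≤ Y` then `X - 𝔼[X] ≤ (Y - 𝔼[Y]) + (𝔼[Y] - 𝔼[X])`, so the deviation term can grow by at
most `a (𝔼[Y] - 𝔼[X])`, which the mean term pays for because `a ≤ 1`.
-/

noncomputable def rhoOSM {Ω : Type*} [MeasurableSpace Ω] (P : Measure Ω) (p a : ℝ)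
    (X : Ω → ℝ) : ℝ :=
  (∫ ω, X ω ∂P) + a * (∫ ω, max (X ω - ∫ ω', X ω' ∂P) 0 ^ p ∂P) ^ (1 / p)

namespace MeasureTheory

variable {α : Type*} [MeasurableSpace α] {μ : Measure α} {p : ENNReal} {f g : α → ℝ}

lemma MemLp.sub_const [IsFiniteMeasure μ] (hf : MemLp f p μ) (c : ℝ) :
    MemLp (fun x => f x - c) p μ :=
  hf.sub (memLp_const c)

lemma MemLp.add_const [IsFiniteMeasure μ] (hf : MemLp f p μ) (c : ℝ) :
    MemLp (fun x => f x + c) p μ :=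
  hf.add (memLp_const c)

lemma lpNorm_posPart_mono_ae (hf : AEStronglyMeasurable f μ) (hg : MemLp g p μ)
    (h : f ≤ᵐ[μ] g) :
    lpNorm (fun x => max (f x) 0) p μ ≤ lpNorm (fun x => max (g x) 0) p μ := by
  rw [← toReal_eLpNorm (f := fun x => max (f x) 0) hf.posPart,
    ← toReal_eLpNorm hg.pos_part.aestronglyMeasurable]
  refine ENNReal.toReal_mono hg.pos_part.eLpNorm_ne_top (eLpNorm_mono_ae ?_)
  filter_upwards [h] with x hx
  simp only [Real.norm_eq_abs, abs_of_nonneg (le_max_right _ (0 : ℝ))]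
  exact max_le_max_right 0 hx

lemma lpNorm_posPart_add_le (hf : MemLp f p μ) (hg : MemLp g p μ) (hp : 1 ≤ p) :
    lpNorm (fun x => max (f x + g x) 0) p μ ≤
      lpNorm (fun x => max (f x) 0) p μ + lpNorm (fun x => max (g x) 0) p μ := by
  refine (lpNorm_mono_real (hf.pos_part.add hg.pos_part) fun x => ?_).trans
    (lpNorm_add_le hf.pos_part hp)
  rw [Real.norm_eq_abs, abs_of_nonneg (le_max_right _ (0 : ℝ))]
  simpa using max_add_add_le_max_add_max (a := f x) (b := g x) (c := 0) (d := 0)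

end MeasureTheory

section rhoOSM

variable {Ω : Type*} [MeasurableSpace Ω] {P : Measure Ω} {p a : ℝ} {X Y : Ω → ℝ}

lemma rhoOSM_eq_lpNorm (hp : 0 < p) (hX : AEStronglyMeasurable X P) :
    rhoOSM P p a X = (∫ ω, X ω ∂P)
      + a * lpNorm (fun ω => max (X ω - ∫ ω', X ω' ∂P) 0) (ENNReal.ofReal p) P := by
  rw [lpNorm_eq_integral_norm_rpow_toReal (by simpa using hp) ENNReal.ofReal_ne_top
    (f := fun ω => max (X ω - ∫ ω', X ω' ∂P) 0) (hX.sub aestronglyMeasurable_const).posPart,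
    ENNReal.toReal_ofReal hp.le, rhoOSM, one_div]
  simp only [Real.norm_eq_abs, abs_of_nonneg (le_max_right _ (0 : ℝ))]

lemma rhoOSM_add_const [IsProbabilityMeasure P] (hX : Integrable X P) (m : ℝ) :
    rhoOSM P p a (fun ω => X ω + m) = rhoOSM P p a X + m := by
  simp only [rhoOSM, integral_add hX (integrable_const m), integral_const, probReal_univ,
    one_smul, add_sub_add_right_eq_sub]
  ring

lemma rhoOSM_const_mul (hp : p ≠ 0) {c : ℝ} (hc : 0 ≤ c) (X : Ω → ℝ) :
    rhoOSM P p a (fun ω => c * X ω) = c * rhoOSM P p a X := by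
  have hpow (ω : Ω) : max (c * X ω - c * ∫ ω', X ω' ∂P) 0 ^ p
      = c ^ p * max (X ω - ∫ ω', X ω' ∂P) 0 ^ p := by
    rw [← mul_sub, ← mul_zero c, ← mul_max_of_nonneg _ _ hc, mul_zero,
      Real.mul_rpow hc (le_max_right _ _)]
  have hint : 0 ≤ ∫ ω, max (X ω - ∫ ω', X ω' ∂P) 0 ^ p ∂P :=
    integral_nonneg fun ω => Real.rpow_nonneg (le_max_right _ _) p
  simp only [rhoOSM, integral_const_mul, hpow]
  rw [Real.mul_rpow (Real.rpow_nonneg hc p) hint, one_div, Real.rpow_rpow_inv hc hp]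
  ring

lemma rhoOSM_add_le [IsFiniteMeasure P] (hp : 1 ≤ p) (ha : 0 ≤ a)
    (hX : MemLp X (ENNReal.ofReal p) P) (hY : MemLp Y (ENNReal.ofReal p) P) :
    rhoOSM P p a (fun ω => X ω + Y ω) ≤ rhoOSM P p a X + rhoOSM P p a Y := by
  have hp0 : 0 < p := zero_lt_one.trans_le hp
  have hq : 1 ≤ ENNReal.ofReal p := ENNReal.one_le_ofReal.2 hp
  have hmean : ∫ ω, X ω + Y ω ∂P = (∫ ω, X ω ∂P) + ∫ ω, Y ω ∂P :=
    integral_add (hX.integrable hq) (hY.integrable hq)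
  have hdev := lpNorm_posPart_add_le (hX.sub_const (∫ ω, X ω ∂P))
    (hY.sub_const (∫ ω, Y ω ∂P)) hq
  rw [rhoOSM_eq_lpNorm (X := fun ω => X ω + Y ω) hp0 (hX.add hY).1, rhoOSM_eq_lpNorm hp0 hX.1,
    rhoOSM_eq_lpNorm hp0 hY.1, hmean]
  simp only [add_sub_add_comm] at hdev ⊢
  linarith [mul_le_mul_of_nonneg_left hdev ha]

lemma rhoOSM_mono [IsProbabilityMeasure P] (hp : 1 ≤ p) (ha0 : 0 ≤ a) (ha1 : a ≤ 1)
    (hX : MemLp X (ENNReal.ofReal p) P) (hY : MemLp Y (ENNReal.ofReal p) P) (h : X ≤ᵐ[P] Y) :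
    rhoOSM P p a X ≤ rhoOSM P p a Y := by
  have hp0 : 0 < p := zero_lt_one.trans_le hp
  have hq : 1 ≤ ENNReal.ofReal p := ENNReal.one_le_ofReal.2 hp
  set d := (∫ ω, Y ω ∂P) - ∫ ω, X ω ∂P
  have hd : 0 ≤ d := sub_nonneg.2 (integral_mono_ae (hX.integrable hq) (hY.integrable hq) h)
  have hdev : lpNorm (fun ω => max (X ω - ∫ ω', X ω' ∂P) 0) (ENNReal.ofReal p) P ≤
      lpNorm (fun ω => max (Y ω - ∫ ω', Y ω' ∂P) 0) (ENNReal.ofReal p) P + d :=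
    calc _ ≤ lpNorm (fun ω => max (Y ω - ∫ ω', Y ω' ∂P + d) 0) (ENNReal.ofReal p) P := by
          refine lpNorm_posPart_mono_ae (f := fun ω => X ω - ∫ ω', X ω' ∂P)
            (hX.1.sub aestronglyMeasurable_const) ((hY.sub_const _).add_const d) ?_
          filter_upwards [h] with ω hω
          linarith
      _ ≤ _ + lpNorm (fun _ => max d 0) (ENNReal.ofReal p) P :=
          lpNorm_posPart_add_le (hY.sub_const _) (memLp_const d) hq
      _ = _ := by simp [max_eq_left hd, hp0, abs_of_nonneg hd]
  rw [rhoOSM_eq_lpNorm hp0 hX.1, rhoOSM_eq_lpNorm hp0 hY.1]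
  linarith [mul_le_mul_of_nonneg_left hdev ha0, mul_le_mul_of_nonneg_right ha1 hd]

lemma rhoOSM_eq_of_identDistrib (h : ProbabilityTheory.IdentDistrib X Y P P) :
    rhoOSM P p a X = rhoOSM P p a Y := by
  have hmean : ∫ ω, X ω ∂P = ∫ ω, Y ω ∂P := h.integral_eq
  have hdev : ∫ ω, max (X ω - ∫ ω', Y ω' ∂P) 0 ^ p ∂P
      = ∫ ω, max (Y ω - ∫ ω', Y ω' ∂P) 0 ^ p ∂P :=
    (h.comp (u := fun t => max (t - ∫ ω', Y ω' ∂P) 0 ^ p) (by fun_prop)).integral_eq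
  rw [rhoOSM, rhoOSM, hmean, hdev]

end rhoOSM

/-- **Example 2 of the paper.** For `p ∈ [1,∞)` and `a ∈ [0,1]`, the one-sided-moment risk
measure `ρ_{p,a}` on `L^p` is a law-invariant coherent risk measure: it is monotone,
translation-equivariant, subadditive, positively homogeneous, and law-invariant. -/
theorem rhoOSM_law_invariant_coherent
    {Ω : Type*} [MeasurableSpace Ω] (P : Measure Ω) [IsProbabilityMeasure P]
    (p a : ℝ) (hp : 1 ≤ p) (ha0 : 0 ≤ a) (ha1 : a ≤ 1) :
    -- monotonicity
    (∀ X Y : Ω → ℝ, MemLp X (ENNReal.ofReal p) P → MemLp Y (ENNReal.ofReal p) P →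
      (∀ᵐ ω ∂P, X ω ≤ Y ω) → rhoOSM P p a X ≤ rhoOSM P p a Y) ∧
    -- translation-equivariance
    (∀ X : Ω → ℝ, MemLp X (ENNReal.ofReal p) P → ∀ m : ℝ,
      rhoOSM P p a (fun ω => X ω + m) = rhoOSM P p a X + m) ∧
    -- subadditivity
    (∀ X Y : Ω → ℝ, MemLp X (ENNReal.ofReal p) P → MemLp Y (ENNReal.ofReal p) P →
      rhoOSM P p a (fun ω => X ω + Y ω) ≤ rhoOSM P p a X + rhoOSM P p a Y) ∧
    -- positive homogeneity
    (∀ X : Ω → ℝ, MemLp X (ENNReal.ofReal p) P → ∀ lam : ℝ, 0 ≤ lam →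
      rhoOSM P p a (fun ω => lam * X ω) = lam * rhoOSM P p a X) ∧
    -- law-invariance
    (∀ X Y : Ω → ℝ, MemLp X (ENNReal.ofReal p) P → MemLp Y (ENNReal.ofReal p) P →
      Measure.map X P = Measure.map Y P → rhoOSM P p a X = rhoOSM P p a Y) := by
  have hq : 1 ≤ ENNReal.ofReal p := ENNReal.one_le_ofReal.2 hp
  refine ⟨fun X Y hX hY h => rhoOSM_mono hp ha0 ha1 hX hY h,
    fun X hX m => rhoOSM_add_const (hX.integrable hq) m,
    fun X Y hX hY => rhoOSM_add_le hp ha0 hX hY,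
    fun X _ lam hlam => rhoOSM_const_mul (zero_lt_one.trans_le hp).ne' hlam X,
    fun X Y hX hY hmap => rhoOSM_eq_of_identDistrib ⟨hX.1.aemeasurable, hY.1.aemeasurable, hmap⟩⟩
end

section
/- Let (V, ‖·‖_V) and (V′, ‖·‖_{V′}) be normed real vector spaces, S ⊆ V, x ∈ V, and T a map defined on S ∪ {x} with values in V′. Let r ≥ 0 and β > 0. Suppose that for every sequence (y_n) in S with ‖y_n − x‖_V → 0 one has ‖T(y_n) − T(x)‖_{V′} = O(‖y_n − x‖_V^β). Let (Ω, 𝓕, ℙ) be a probability space and, for each n ∈ ℕ, let X_n: Ω → S be a map such that ω ↦ ‖X_n(ω) − x‖_V and ω ↦ ‖T(X_n(ω)) − T(x)‖_{V′} are measurable. If n^r·‖X_n − x‖_V → 0 ℙ-almost surely, then n^{rβ}·‖T(X_n) − T(x)‖_{V′} → 0 ℙ-almost surely. -/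
open MeasureTheory Filter Set

/-- **Marcinkiewicz–Zygmund plug-in principle** (Introduction of the paper):
Hölder-β continuity of `T` at `x` along `S`, together with a rate-`r` strong law for
`X n`, yields a rate-`r·β` strong law for `T (X n)`. -/
theorem mz_plug_in_principle
    {V V' : Type*} [NormedAddCommGroup V] [NormedSpace ℝ V]
    [NormedAddCommGroup V'] [NormedSpace ℝ V']
    (S : Set V) (x : V) (T : V → V') (r β : ℝ) (hr : 0 ≤ r) (hβ : 0 < β)
    (hT : ∀ y : ℕ → V, (∀ n, y n ∈ S) →
      Tendsto (fun n => ‖y n - x‖) atTop (nhds 0) →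
      ∃ C > 0, ∀ᶠ n in atTop, ‖T (y n) - T x‖ ≤ C * ‖y n - x‖ ^ β)
    {Ω : Type*} [MeasurableSpace Ω] (P : Measure Ω) [IsProbabilityMeasure P]
    (X : ℕ → Ω → V) (hXS : ∀ n ω, X n ω ∈ S)
    (hmeas₁ : ∀ n, Measurable fun ω => ‖X n ω - x‖)
    (hmeas₂ : ∀ n, Measurable fun ω => ‖T (X n ω) - T x‖)
    (hconv : ∀ᵐ ω ∂P, Tendsto (fun n : ℕ => (n : ℝ) ^ r * ‖X n ω - x‖) atTop (nhds 0)) :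
    ∀ᵐ ω ∂P, Tendsto (fun n : ℕ => (n : ℝ) ^ (r * β) * ‖T (X n ω) - T x‖) atTop (nhds 0) := by
  filter_upwards [hconv] with ω hω
  -- first, ‖X n ω - x‖ → 0
  have hnorm : Tendsto (fun n : ℕ => ‖X n ω - x‖) atTop (nhds 0) := by
    apply squeeze_zero' (Eventually.of_forall fun n => norm_nonneg _) _ hω
    filter_upwards [eventually_ge_atTop 1] with n hn
    have h1 : (1 : ℝ) ≤ (n : ℝ) ^ r :=
      Real.one_le_rpow (by exact_mod_cast hn) hr
    calc ‖X n ω - x‖ = 1 * ‖X n ω - x‖ := by ring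
      _ ≤ (n : ℝ) ^ r * ‖X n ω - x‖ :=
        mul_le_mul_of_nonneg_right h1 (norm_nonneg _)
  obtain ⟨C, hC, hev⟩ := hT (fun n => X n ω) (fun n => hXS n ω) hnorm
  -- upper bound: n^{rβ} ‖T(X n)-T x‖ ≤ C * (n^r ‖X n - x‖)^β
  have hub : Tendsto (fun n : ℕ => C * ((n : ℝ) ^ r * ‖X n ω - x‖) ^ β) atTop (nhds 0) := by
    have := (hω.rpow_const (Or.inr hβ.le)).const_mul C
    simpa [Real.zero_rpow hβ.ne'] using this
  apply squeeze_zero'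
    (Eventually.of_forall fun n =>
      mul_nonneg (Real.rpow_nonneg (Nat.cast_nonneg _) _) (norm_nonneg _)) _ hub
  filter_upwards [hev] with n hn
  have hnn : (0 : ℝ) ≤ (n : ℝ) ^ r := Real.rpow_nonneg (Nat.cast_nonneg _) _
  calc (n : ℝ) ^ (r * β) * ‖T (X n ω) - T x‖
      ≤ (n : ℝ) ^ (r * β) * (C * ‖X n ω - x‖ ^ β) :=
        mul_le_mul_of_nonneg_left hn (Real.rpow_nonneg (Nat.cast_nonneg _) _)
    _ = C * (((n : ℝ) ^ r) ^ β * ‖X n ω - x‖ ^ β) := by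
        rw [Real.rpow_mul (Nat.cast_nonneg _)]; ring
    _ = C * ((n : ℝ) ^ r * ‖X n ω - x‖) ^ β := by
        rw [Real.mul_rpow hnn (norm_nonneg _)]
end
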